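/- Let P be the self-similar measure for Sⱼ(x) = r·x + ((j−1)/2)(1−r), j = 1,2,3, weights 1/3, 0 < r < 1/3. Then the conditional expectation of X given X ∈ [0, 1/2] equals (r+1)/(6−2r), and the conditional expectation of X given X ∈ [1/2, 1] equals (5−3r)/(6−2r). -/

import Mathlib

/-!
Self-similarity turns an integral against `P` into the average of the integrals of `φ ∘ Sⱼ`.
The `Sⱼ` are `r`-contractions of `[0,1]`, so the mass at distance `> M` from `[0,1]` is at most
the mass at distance `> M / r`, hence zero: `P` is carried by `[0,1]`. There, as `r < 1/2`, `S₀`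
lands in `[0,1/2)`, `S₂` in `(1/2,1]`, and `S₁ x` lies in either half exactly when `x` does. Hence
`m = P[0,1/2]`, the mean `e = ∫ x dP` and `ℓ = ∫_{[0,1/2]} x dP` solve the linear equations
`3m = 1 + m`, `e = r e + (1 - r)/2` and `3ℓ = r e + r ℓ + (1 - r) m / 2`, so `m = e = 1/2` and
`ℓ = (1 + r) / (4 (3 - r))`; the half `[1/2,1]` is symmetric.
-/

open MeasureTheory
open scoped ENNReal

/-- The similarity mappings `S_j(x) = r x + ((j-1)/2)(1-r)`, indexed by `j : Fin 3`
(so `j = 0, 1, 2` corresponds to `j = 1, 2, 3` in the paper). -/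
noncomputable def Smap (r : ℝ) (j : Fin 3) (x : ℝ) : ℝ := r * x + (j : ℝ) / 2 * (1 - r)

/-- For a word `σ = σ₁ ⋯ σ_k` over the alphabet, the composition `S_σ = S_{σ₁} ∘ ⋯ ∘ S_{σ_k}`. -/
noncomputable def Sword (r : ℝ) {k : ℕ} (σ : Fin k → Fin 3) : ℝ → ℝ :=
  fun x => (List.ofFn σ).foldr (fun j y => Smap r j y) x

/-- The cylinder interval `J_σ = S_σ([0,1])`. -/
noncomputable def cylJ (r : ℝ) {k : ℕ} (σ : Fin k → Fin 3) : Set ℝ :=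
  Set.image (Sword r σ) (Set.Icc (0 : ℝ) 1)

/-- The conditional mean `E(X | X ∈ A)` of a random variable with distribution `P`. -/
noncomputable def condMean (P : Measure ℝ) (A : Set ℝ) : ℝ :=
  (P A).toReal⁻¹ * ∫ x in A, x ∂P

open Set Metric
open scoped NNReal

lemma LipschitzWith.infDist_le_mul_of_mapsTo {X : Type*} [PseudoMetricSpace X] {f : X → X}
    {c : ℝ≥0} (hf : LipschitzWith c f) {K : Set X} (hK : K.Nonempty) (hfK : MapsTo f K K)
    (x : X) : infDist (f x) K ≤ c * infDist x K := by
  have : Nonempty K := hK.to_subtype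
  rw [infDist_eq_iInf (x := x), Real.mul_iInf_of_nonneg c.coe_nonneg]
  exact le_ciInf fun y => (infDist_le_dist_of_mem (hfK y.2)).trans (hf.dist_le_mul x y)

lemma measure_lt_eq_zero_of_mul_le_imp_measure_le {X : Type*} [MeasurableSpace X]
    {μ : Measure X} [IsFiniteMeasure μ] {g : X → ℝ} (hg : Measurable g) {c : ℝ} (hc : c < 1)
    (h : ∀ M M', c * M' ≤ M → μ {x | M < g x} ≤ μ {x | M' < g x}) {M : ℝ} (hM : 0 < M) :
    μ {x | M < g x} = 0 := by
  -- `Mk k = M + k (1 - c) M` tends to infinity, and `Mk k - c Mk (k + 1) = (1 - c)² (k + 1) M`.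
  set Mk : ℕ → ℝ := fun k => M + k * ((1 - c) * M)
  have hδ : 0 < (1 - c) * M := mul_pos (sub_pos.2 hc) hM
  have hle : ∀ k, μ {x | M < g x} ≤ μ {x | Mk k < g x} := by
    intro k
    induction k with
    | zero => simp [Mk]
    | succ k ih =>
      refine ih.trans (h _ _ ?_)
      have := mul_nonneg (mul_nonneg (sq_nonneg (1 - c)) hM.le) (k.cast_add_one_pos (α := ℝ)).le
      simp only [Mk]; push_cast; linarith
  have hanti : Antitone fun k => {x | Mk k < g x} := fun k l hkl x hx =>
    lt_of_le_of_lt (show Mk k ≤ Mk l by simp only [Mk]; gcongr) hx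
  have hempty : (⋂ k, {x | Mk k < g x}) = ∅ := by
    refine eq_empty_of_forall_notMem fun x hx => ?_
    obtain ⟨k, hk⟩ := exists_nat_gt (g x / ((1 - c) * M))
    have hxk : Mk k < g x := mem_iInter.1 hx k
    rw [div_lt_iff₀ hδ] at hk
    simp only [Mk] at hxk
    linarith
  refine le_antisymm ?_ bot_le
  calc μ {x | M < g x} ≤ ⨅ k, μ {x | Mk k < g x} := le_iInf hle
    _ = μ (⋂ k, {x | Mk k < g x}) := (hanti.measure_iInter
        (fun k => (measurableSet_lt measurable_const hg).nullMeasurableSet)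
        ⟨0, measure_ne_top _ _⟩).symm
    _ = 0 := by rw [hempty, measure_empty]

def IsSelfSimilar {X ι : Type*} [MeasurableSpace X] [Fintype ι] (w : ι → ℝ≥0∞) (f : ι → X → X)
    (μ : Measure X) : Prop :=
  μ = ∑ i, w i • μ.map (f i)

namespace IsSelfSimilar

variable {X ι : Type*} [MeasurableSpace X] [Fintype ι] {w : ι → ℝ≥0∞} {f : ι → X → X}
  {μ : Measure X}

lemma measure_eq (hμ : IsSelfSimilar w f μ) (hf : ∀ i, Measurable (f i)) {s : Set X}
    (hs : MeasurableSet s) : μ s = ∑ i, w i * μ (f i ⁻¹' s) := by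
  conv_lhs => rw [hμ]
  simp [Measure.finsetSum_apply, Measure.map_apply (hf _) hs]

lemma measure_le_of_preimage_subset (hμ : IsSelfSimilar w f μ) (hw : ∑ i, w i = 1)
    (hf : ∀ i, Measurable (f i)) {s t : Set X} (hs : MeasurableSet s)
    (hst : ∀ i, f i ⁻¹' s ⊆ t) : μ s ≤ μ t :=
  calc μ s = ∑ i, w i * μ (f i ⁻¹' s) := hμ.measure_eq hf hs
    _ ≤ ∑ i, w i * μ t := by gcongr with i; exact hst i
    _ = μ t := by rw [← Finset.sum_mul, hw, one_mul]

lemma ae_mem_of_lipschitzWith [PseudoMetricSpace X] [BorelSpace X] [IsFiniteMeasure μ]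
    (hμ : IsSelfSimilar w f μ) (hw : ∑ i, w i = 1) {c : ℝ≥0} (hc : c < 1)
    (hf : ∀ i, LipschitzWith c (f i)) {K : Set X} (hK : IsClosed K) (hKne : K.Nonempty)
    (hfK : ∀ i, MapsTo (f i) K K) : ∀ᵐ x ∂μ, x ∈ K := by
  have hg : Measurable fun x => infDist x K := (continuous_infDist_pt K).measurable
  have hfar : ∀ M > 0, μ {x | M < infDist x K} = 0 := by
    refine fun M hM => measure_lt_eq_zero_of_mul_le_imp_measure_le hg (c := c) (mod_cast hc) ?_ hM
    intro M M' hM'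
    refine hμ.measure_le_of_preimage_subset hw (fun i => (hf i).continuous.measurable)
      (measurableSet_lt measurable_const hg) fun i x hx => ?_
    exact lt_of_mul_lt_mul_left ((hM'.trans_lt hx).trans_le
      ((hf i).infDist_le_mul_of_mapsTo hKne (hfK i) x)) c.coe_nonneg
  refine ae_iff.2 (measure_mono_null (fun x hx => ?_)
    (measure_iUnion_null fun n : ℕ => hfar (1 / (n + 1)) Nat.one_div_pos_of_nat))
  have hpos : 0 < infDist x K :=
    infDist_nonneg.lt_of_ne' fun h => hx ((hK.mem_iff_infDist_zero hKne).2 h)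
  obtain ⟨n, hn⟩ := exists_nat_one_div_lt hpos
  exact mem_iUnion.2 ⟨n, hn⟩

lemma integral_eq {E : Type*} [NormedAddCommGroup E] [NormedSpace ℝ E]
    (hμ : IsSelfSimilar w f μ) (hf : ∀ i, Measurable (f i)) {φ : X → E}
    (hφm : StronglyMeasurable φ) (hφ : Integrable φ μ) :
    ∫ x, φ x ∂μ = ∑ i, (w i).toReal • ∫ x, φ (f i x) ∂μ := by
  have hφi : ∀ i, Integrable φ (w i • μ.map (f i)) := fun i =>
    hφ.mono_measure <| by
      conv_rhs => rw [hμ]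
      exact Finset.single_le_sum (f := fun i => w i • μ.map (f i)) (fun _ _ => bot_le)
        (Finset.mem_univ i)
  conv_lhs => rw [hμ]
  rw [integral_finsetSum_measure fun i _ => hφi i]
  simp only [integral_smul_measure, integral_map (hf _).aemeasurable hφm.aestronglyMeasurable]

lemma setIntegral_eq {E : Type*} [NormedAddCommGroup E] [NormedSpace ℝ E]
    (hμ : IsSelfSimilar w f μ) (hf : ∀ i, Measurable (f i)) {φ : X → E}
    (hφm : StronglyMeasurable φ) {s : Set X} (hs : MeasurableSet s) (hφ : IntegrableOn φ s μ) :
    ∫ x in s, φ x ∂μ = ∑ i, (w i).toReal • ∫ x in f i ⁻¹' s, φ (f i x) ∂μ := by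
  rw [← integral_indicator hs, hμ.integral_eq hf (hφm.indicator hs)
    ((integrable_indicator_iff hs).2 hφ)]
  simp only [← indicator_comp_right, integral_indicator (hf _ hs), Function.comp_def]

end IsSelfSimilar

section Smap

variable {r : ℝ} {P : Measure ℝ}

lemma Smap_zero (r x : ℝ) : Smap r 0 x = r * x := by simp [Smap]

lemma Smap_one (r x : ℝ) : Smap r 1 x = r * x + (1 - r) / 2 := by
  rw [Smap, Fin.val_one, Nat.cast_one]; ring

lemma Smap_two (r x : ℝ) : Smap r 2 x = r * x + (1 - r) := by simp [Smap]

lemma measurable_Smap (r : ℝ) (j : Fin 3) : Measurable (Smap r j) := by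
  unfold Smap; fun_prop

lemma lipschitzWith_Smap (hr : 0 ≤ r) (j : Fin 3) : LipschitzWith r.toNNReal (Smap r j) :=
  LipschitzWith.of_dist_le_mul fun x y => le_of_eq <| by
    simp only [Smap, Real.dist_eq, add_sub_add_right_eq_sub, ← mul_sub, abs_mul, abs_of_nonneg hr,
      Real.coe_toNNReal r hr]

lemma mapsTo_Smap_Icc (hr0 : 0 ≤ r) (hr1 : r ≤ 1) (j : Fin 3) :
    MapsTo (Smap r j) (Icc 0 1) (Icc 0 1) := by
  rintro x ⟨hx0, hx1⟩
  have hj : (j : ℝ) ≤ 2 := by exact_mod_cast Nat.le_of_lt_succ j.isLt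
  constructor <;> simp only [Smap] <;> nlinarith [j.val.cast_nonneg (α := ℝ)]

lemma ae_mem_Icc_of_Smap (hr0 : 0 ≤ r) (hr1 : r < 1)
    (hP : IsSelfSimilar (fun _ => (3 : ℝ≥0∞)⁻¹) (Smap r) P) [IsFiniteMeasure P] :
    ∀ᵐ x ∂P, x ∈ Icc (0 : ℝ) 1 :=
  hP.ae_mem_of_lipschitzWith (by simp [ENNReal.mul_inv_cancel]) (Real.toNNReal_lt_one.2 hr1)
    (lipschitzWith_Smap hr0) isClosed_Icc (nonempty_Icc.2 zero_le_one) (mapsTo_Smap_Icc hr0 hr1.le)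

lemma integrable_id_of_ae_mem_Icc (hK : ∀ᵐ x ∂P, x ∈ Icc (0 : ℝ) 1) [IsFiniteMeasure P] :
    Integrable (fun x => x) P :=
  (integrable_const 1).mono' aestronglyMeasurable_id
    (hK.mono fun x hx => abs_le.2 ⟨by linarith [hx.1], hx.2⟩)

lemma setIntegral_Smap (j : Fin 3) {E : Set ℝ} (hE : IntegrableOn (fun x => x) E P)
    [IsFiniteMeasure P] :
    ∫ x in E, Smap r j x ∂P = r * ∫ x in E, x ∂P + j / 2 * (1 - r) * P.real E := by
  simp only [Smap]
  rw [integral_add (hE.const_mul r) integrableOn_const, integral_const_mul,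
    setIntegral_const, smul_eq_mul, mul_comm (P.real E)]

lemma measureReal_eq_of_preimage_ae_eq (hP : IsSelfSimilar (fun _ => (3 : ℝ≥0∞)⁻¹) (Smap r) P)
    [IsFiniteMeasure P] {A E₀ E₁ E₂ : Set ℝ} (hA : MeasurableSet A)
    (hE : ∀ j, Smap r j ⁻¹' A =ᵐ[P] ![E₀, E₁, E₂] j) :
    P.real A = 3⁻¹ * (P.real E₀ + P.real E₁ + P.real E₂) := by
  have := hP.setIntegral_eq (measurable_Smap r) stronglyMeasurable_const hA
    (integrableOn_const (C := (1 : ℝ)))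
  simpa [setIntegral_congr_set (hE _), Fin.sum_univ_three, mul_add] using this

lemma setIntegral_eq_of_preimage_ae_eq (hP : IsSelfSimilar (fun _ => (3 : ℝ≥0∞)⁻¹) (Smap r) P)
    [IsFiniteMeasure P] (hid : Integrable (fun x => x) P) {A E₀ E₁ E₂ : Set ℝ}
    (hA : MeasurableSet A) (hE : ∀ j, Smap r j ⁻¹' A =ᵐ[P] ![E₀, E₁, E₂] j) :
    ∫ x in A, x ∂P = 3⁻¹ * (r * (∫ x in E₀, x ∂P + ∫ x in E₁, x ∂P + ∫ x in E₂, x ∂P)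
      + (1 - r) * (P.real E₁ / 2 + P.real E₂)) := by
  rw [hP.setIntegral_eq (measurable_Smap r) (φ := fun x => x) stronglyMeasurable_id hA
    hid.integrableOn]
  simp only [Fin.sum_univ_three, ENNReal.toReal_inv, ENNReal.toReal_ofNat, smul_eq_mul,
    setIntegral_congr_set (hE _), setIntegral_Smap _ hid.integrableOn, Matrix.cons_val_zero,
    Matrix.cons_val_one, Matrix.cons_val_two, Matrix.tail_cons, Matrix.head_cons, Fin.val_zero,
    Fin.val_one, Fin.val_two, Nat.cast_zero, Nat.cast_one, Nat.cast_ofNat]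
  ring

lemma integral_id_eq_half (hr1 : r < 1) (hP : IsSelfSimilar (fun _ => (3 : ℝ≥0∞)⁻¹) (Smap r) P)
    [IsProbabilityMeasure P] (hid : Integrable (fun x => x) P) : ∫ x, x ∂P = 1 / 2 := by
  have h := setIntegral_eq_of_preimage_ae_eq hP hid MeasurableSet.univ (E₀ := univ) (E₁ := univ)
    (E₂ := univ) fun j => .of_eq (by fin_cases j <;> rfl)
  simp only [setIntegral_univ, probReal_univ] at h
  have h' : (1 - r) * (∫ x, x ∂P - 1 / 2) = 0 := by linarith
  linarith [(mul_eq_zero.1 h').resolve_left (by linarith)]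

lemma preimage_Smap_Icc_zero_half_ae_eq (hr0 : 0 < r) (hr1 : r < 1 / 2)
    (hK : ∀ᵐ x ∂P, x ∈ Icc (0 : ℝ) 1) (j : Fin 3) :
    Smap r j ⁻¹' Icc 0 (1 / 2) =ᵐ[P] ![univ, Icc 0 (1 / 2), ∅] j := by
  refine Filter.eventuallyEq_set.2 (hK.mono fun x ⟨hx0, hx1⟩ => ?_)
  match j with
  | 0 =>
    simp only [mem_preimage, Smap_zero, mem_Icc, Matrix.cons_val_zero, mem_univ, iff_true]
    exact ⟨by positivity, by nlinarith⟩
  | 1 =>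
    simp only [mem_preimage, Smap_one, mem_Icc, Matrix.cons_val_one, Matrix.cons_val_zero]
    exact ⟨fun h => ⟨hx0, by nlinarith [h.2]⟩, fun h => ⟨by nlinarith, by nlinarith [h.2]⟩⟩
  | 2 =>
    simp only [mem_preimage, Smap_two, mem_Icc, Matrix.cons_val_two, Matrix.tail_cons,
      Matrix.head_cons, mem_empty_iff_false, iff_false, not_and, not_le]
    intro; nlinarith

lemma preimage_Smap_Icc_half_one_ae_eq (hr0 : 0 < r) (hr1 : r < 1 / 2)
    (hK : ∀ᵐ x ∂P, x ∈ Icc (0 : ℝ) 1) (j : Fin 3) :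
    Smap r j ⁻¹' Icc (1 / 2) 1 =ᵐ[P] ![∅, Icc (1 / 2) 1, univ] j := by
  refine Filter.eventuallyEq_set.2 (hK.mono fun x ⟨hx0, hx1⟩ => ?_)
  match j with
  | 0 =>
    simp only [mem_preimage, Smap_zero, mem_Icc, Matrix.cons_val_zero, mem_empty_iff_false,
      iff_false, not_and, not_le]
    intro; nlinarith
  | 1 =>
    simp only [mem_preimage, Smap_one, mem_Icc, Matrix.cons_val_one, Matrix.cons_val_zero]
    exact ⟨fun h => ⟨by nlinarith [h.1], hx1⟩, fun h => ⟨by nlinarith [h.1], by nlinarith⟩⟩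
  | 2 =>
    simp only [mem_preimage, Smap_two, mem_Icc, Matrix.cons_val_two, Matrix.tail_cons,
      Matrix.head_cons, mem_univ, iff_true]
    exact ⟨by nlinarith, by nlinarith⟩

lemma condMean_eq_two_mul_of_measureReal_eq_half {A : Set ℝ} (hA : P.real A = 1 / 2) :
    condMean P A = 2 * ∫ x in A, x ∂P := by
  rw [condMean, ← measureReal_def, hA]; norm_num

lemma condMean_Icc_zero_half (hr0 : 0 < r) (hr1 : r < 1 / 2)
    (hP : IsSelfSimilar (fun _ => (3 : ℝ≥0∞)⁻¹) (Smap r) P) [IsProbabilityMeasure P] :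
    condMean P (Icc 0 (1 / 2)) = (r + 1) / (6 - 2 * r) := by
  have hK := ae_mem_Icc_of_Smap hr0.le (by linarith) hP
  have hid := integrable_id_of_ae_mem_Icc hK
  have hE := preimage_Smap_Icc_zero_half_ae_eq hr0 hr1 hK
  have hmass := measureReal_eq_of_preimage_ae_eq hP measurableSet_Icc hE
  have hmoment := setIntegral_eq_of_preimage_ae_eq hP hid measurableSet_Icc hE
  set L := Icc (0 : ℝ) (1 / 2)
  simp only [probReal_univ, measureReal_empty, setIntegral_univ, Measure.restrict_empty,
    integral_zero_measure, integral_id_eq_half (by linarith) hP hid] at hmass hmoment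
  have hL : P.real L = 1 / 2 := by linarith
  have hℓ : ∫ x in L, x ∂P = (r + 1) / (4 * (3 - r)) := by
    rw [eq_div_iff (by linarith)]; rw [hL] at hmoment; linarith
  have : (3 : ℝ) - r ≠ 0 := by linarith
  rw [condMean_eq_two_mul_of_measureReal_eq_half hL, hℓ,
    show (6 : ℝ) - 2 * r = 2 * (3 - r) by ring]
  field_simp
  ring

lemma condMean_Icc_half_one (hr0 : 0 < r) (hr1 : r < 1 / 2)
    (hP : IsSelfSimilar (fun _ => (3 : ℝ≥0∞)⁻¹) (Smap r) P) [IsProbabilityMeasure P] :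
    condMean P (Icc (1 / 2) 1) = (5 - 3 * r) / (6 - 2 * r) := by
  have hK := ae_mem_Icc_of_Smap hr0.le (by linarith) hP
  have hid := integrable_id_of_ae_mem_Icc hK
  have hE := preimage_Smap_Icc_half_one_ae_eq hr0 hr1 hK
  have hmass := measureReal_eq_of_preimage_ae_eq hP measurableSet_Icc hE
  have hmoment := setIntegral_eq_of_preimage_ae_eq hP hid measurableSet_Icc hE
  set R := Icc (1 / 2 : ℝ) 1
  simp only [probReal_univ, measureReal_empty, setIntegral_univ, Measure.restrict_empty,
    integral_zero_measure, integral_id_eq_half (by linarith) hP hid] at hmass hmoment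
  have hR : P.real R = 1 / 2 := by linarith
  have hρ : ∫ x in R, x ∂P = (5 - 3 * r) / (4 * (3 - r)) := by
    rw [eq_div_iff (by linarith)]; rw [hR] at hmoment; linarith
  have : (3 : ℝ) - r ≠ 0 := by linarith
  rw [condMean_eq_two_mul_of_measureReal_eq_half hR, hρ,
    show (6 : ℝ) - 2 * r = 2 * (3 - r) by ring]
  field_simp
  ring

end Smap

theorem stmt_5 (r : ℝ) (hr0 : 0 < r) (hr1 : r < 1/3)
    (P : Measure ℝ) [IsProbabilityMeasure P]
    (hP : P = (3 : ℝ≥0∞)⁻¹ •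
      (P.map (Smap r 0) + P.map (Smap r 1) + P.map (Smap r 2))) :
    condMean P (Set.Icc (0 : ℝ) (1/2)) = (r + 1) / (6 - 2*r) ∧
    condMean P (Set.Icc (1/2 : ℝ) 1) = (5 - 3*r) / (6 - 2*r) := by
  have hP' : IsSelfSimilar (fun _ => (3 : ℝ≥0∞)⁻¹) (Smap r) P := by
    rwa [IsSelfSimilar, Fin.sum_univ_three, ← smul_add, ← smul_add]
  exact ⟨condMean_Icc_zero_half hr0 (by linarith) hP', condMean_Icc_half_one hr0 (by linarith) hP'⟩
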